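/- (PGA duality via the Euclidean split.) For all C, D in the Euclidean subalgebra G₃ of CGA generated by {ι(e₁), ι(e₂), ι(e₃)}, the projective dual of C + D ι(e₀) satisfies (C + D ι(e₀))^{*_P} = −D^{*_E} + C^{*_E} ι(e₀), where X^{*_E} := −X I_E is the Euclidean dual. -/

import Mathlib

open CliffordAlgebra

/-- The matrix of the CGA inner product on `V = ℝ⁵`; indices `0, 1, 2, 3, 4`
correspond to the basis `e₀, e₁, e₂, e₃, e∞`. -/
def Bmat : Matrix (Fin 5) (Fin 5) ℝ :=
  !![0, 0, 0, 0, -1;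
     0, 1, 0, 0, 0;
     0, 0, 1, 0, 0;
     0, 0, 0, 1, 0;
     -1, 0, 0, 0, 0]

/-- The CGA quadratic form
`Q(a e₀ + x₁e₁ + x₂e₂ + x₃e₃ + b e∞) = x₁² + x₂² + x₃² − 2ab`. -/
noncomputable def Q : QuadraticForm ℝ (Fin 5 → ℝ) := Bmat.toQuadraticMap'

/-- The basis vectors of `V = ℝ⁵`: `e 0 = e₀`, `e 1, e 2, e 3` Euclidean, `e 4 = e∞`. -/
def e (i : Fin 5) : Fin 5 → ℝ := Pi.single i 1

/-- The linear map `♯ : V → V` fixing `e₁, e₂, e₃` and sending `e₀ ↦ -e∞`, `e∞ ↦ -e₀`. -/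
def sharpV : (Fin 5 → ℝ) →ₗ[ℝ] (Fin 5 → ℝ) where
  toFun v i := if i = 0 then -(v 4) else if i = 4 then -(v 0) else v i
  map_add' u v := by
    funext i
    by_cases h : i = 0 <;> by_cases h' : i = 4 <;> simp [h, h'] <;> ring
  map_smul' c v := by
    funext i
    by_cases h : i = 0 <;> by_cases h' : i = 4 <;> simp [h, h'] <;> ring

/-- Outer (wedge) product of a multivector with a vector:
`A ∧ v := ½ (A ι(v) + ι(v) α(A))`, where `α` is the grade involution. -/
noncomputable def wedgeVec (A : CliffordAlgebra Q) (v : Fin 5 → ℝ) : CliffordAlgebra Q :=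
  (1 / 2 : ℝ) • (A * ι Q v + ι Q v * involute A)

/-- The conformal pseudoscalar `I_c = (((e₀ ∧ e₁) ∧ e₂) ∧ e₃) ∧ e∞`. -/
noncomputable def Ic : CliffordAlgebra Q :=
  wedgeVec (wedgeVec (wedgeVec (wedgeVec (ι Q (e 0)) (e 1)) (e 2)) (e 3)) (e 4)

/-- The subalgebra `CGA₀` of CGA generated by `ι(e₀), ι(e₁), ι(e₂), ι(e₃)`. -/
noncomputable def CGA₀ : Subalgebra ℝ (CliffordAlgebra Q) :=
  Algebra.adjoin ℝ {ι Q (e 0), ι Q (e 1), ι Q (e 2), ι Q (e 3)}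

/-- The Euclidean subalgebra `G₃` of CGA generated by `ι(e₁), ι(e₂), ι(e₃)`. -/
noncomputable def G₃ : Subalgebra ℝ (CliffordAlgebra Q) :=
  Algebra.adjoin ℝ {ι Q (e 1), ι Q (e 2), ι Q (e 3)}

/-- The Euclidean pseudoscalar `I_E = ι(e₁) ι(e₂) ι(e₃)`. -/
noncomputable def IE : CliffordAlgebra Q := ι Q (e 1) * ι Q (e 2) * ι Q (e 3)

/-- The Euclidean dual `X^{*_E} := X I_E⁻¹ = -X I_E`. -/
noncomputable def dualE (X : CliffordAlgebra Q) : CliffordAlgebra Q := -(X * IE)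

/-- The projective (PGA) dual `A^{*_P} := ♯((A ∧ e∞) I_c⁻¹)`, with `I_c⁻¹ = -I_c`,
expressed relative to a realization `F` of the involution `♯` on the Clifford algebra
(i.e. `F` is the algebra endomorphism induced by the isometry `♯ : V → V`,
characterized by `F (ι v) = ι (♯ v)`). -/
noncomputable def dualP (F : CliffordAlgebra Q →ₐ[ℝ] CliffordAlgebra Q)
    (A : CliffordAlgebra Q) : CliffordAlgebra Q :=
  F (wedgeVec A (e 4) * (-Ic))

/-!
Write `n = ι e₀`, `m = ι e∞` and `E₀ = e₀ ∧ e∞ = 1 + n m`; then `E₀² = 1` and `m E₀ = -m`.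
Elements of `G₃` graded-commute with `n` and `m`, so `(C + D n) ∧ e∞ = C m + D E₀`, and
`I_c = -I_E E₀` with `I_E` commuting with `E₀`. Hence `((C + D n) ∧ e∞) I_c⁻¹ = C I_E m + D I_E`,
and `♯` fixes `G₃` and sends `m` to `-n`.
-/

section Orthogonal

variable {R M : Type*} [CommRing R] [AddCommGroup M] [Module R M] {q : QuadraticForm R M}

theorem ι_mul_involute_of_mem_adjoin {v : M} {S : Set M} (hS : ∀ w ∈ S, q.IsOrtho v w)
    {X : CliffordAlgebra q} (hX : X ∈ Algebra.adjoin R (ι q '' S)) :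
    ι q v * involute X = X * ι q v := by
  induction hX using Algebra.adjoin_induction with
  | mem x hx =>
    obtain ⟨w, hw, rfl⟩ := hx
    rw [involute_ι, mul_neg, ι_mul_ι_comm_of_isOrtho (hS w hw), neg_neg]
  | algebraMap r => rw [AlgHom.commutes, Algebra.commutes]
  | add x y _ _ hx hy => rw [map_add, mul_add, add_mul, hx, hy]
  | mul x y _ _ hx hy => rw [map_mul, ← mul_assoc, hx, mul_assoc, hy, mul_assoc]

end Orthogonal

theorem Q_eq_toQuadraticMap :
    Q = LinearMap.BilinMap.toQuadraticMap (Matrix.toLinearMap₂' ℝ Bmat) := rfl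

theorem Q_e (i : Fin 5) : Q (e i) = Bmat i i := by
  rw [Q_eq_toQuadraticMap, LinearMap.BilinMap.toQuadraticMap_apply, Matrix.toLinearMap₂'_apply']
  simp [e]

theorem polar_Q_e (i j : Fin 5) : QuadraticMap.polar Q (e i) (e j) = Bmat i j + Bmat j i := by
  rw [Q_eq_toQuadraticMap, LinearMap.BilinMap.polar_toQuadraticMap, Matrix.toLinearMap₂'_apply',
    Matrix.toLinearMap₂'_apply']
  simp [e]

theorem isOrtho_e_iff {i j : Fin 5} : Q.IsOrtho (e i) (e j) ↔ Bmat i j + Bmat j i = 0 := by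
  rw [← QuadraticMap.isOrtho_polarBilin, QuadraticMap.polarBilin_apply_apply, polar_Q_e]

theorem ι_e4_mul_self : ι Q (e 4) * ι Q (e 4) = 0 := by
  simp [ι_sq_scalar, Q_e, Bmat]

theorem ι_e4_mul_ι_e0 : ι Q (e 4) * ι Q (e 0) = -2 - ι Q (e 0) * ι Q (e 4) := by
  have h := ι_mul_ι_add_swap (Q := Q) (e 4) (e 0)
  rw [polar_Q_e, show Bmat 4 0 + Bmat 0 4 = -2 by simp [Bmat]; norm_num, map_neg, map_ofNat] at h
  exact eq_sub_of_add_eq h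

theorem sharpV_e_of_ne {i : Fin 5} (h0 : i ≠ 0) (h4 : i ≠ 4) : sharpV (e i) = e i := by
  funext j
  simp only [sharpV, LinearMap.coe_mk, AddHom.coe_mk, e, Pi.single_apply]
  split_ifs <;> simp_all

theorem sharpV_e4 : sharpV (e 4) = -e 0 := by
  funext j
  simp only [sharpV, LinearMap.coe_mk, AddHom.coe_mk, e, Pi.neg_apply, Pi.single_apply]
  split_ifs <;> simp_all

theorem G₃_eq_adjoin_image : G₃ = Algebra.adjoin ℝ (ι Q '' {e 1, e 2, e 3}) := by
  simp only [G₃, Set.image_insert_eq, Set.image_singleton]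

theorem ι_mul_involute_of_mem_G₃ {v : Fin 5 → ℝ}
    (hv : ∀ w ∈ ({e 1, e 2, e 3} : Set _), Q.IsOrtho v w) {X : CliffordAlgebra Q} (hX : X ∈ G₃) :
    ι Q v * involute X = X * ι Q v :=
  ι_mul_involute_of_mem_adjoin hv (G₃_eq_adjoin_image ▸ hX)

theorem ι_e4_mul_involute_of_mem_G₃ {X : CliffordAlgebra Q} (hX : X ∈ G₃) :
    ι Q (e 4) * involute X = X * ι Q (e 4) :=
  ι_mul_involute_of_mem_G₃ (by simp [isOrtho_e_iff, Bmat]) hX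

theorem apply_eq_self_of_mem_G₃ {F : CliffordAlgebra Q →ₐ[ℝ] CliffordAlgebra Q}
    (hF : ∀ v : Fin 5 → ℝ, F (ι Q v) = ι Q (sharpV v)) {X : CliffordAlgebra Q} (hX : X ∈ G₃) :
    F X = X := by
  refine AlgHom.adjoin_le_equalizer F (AlgHom.id ℝ _) ?_ hX
  rintro _ (rfl | rfl | rfl) <;> simp [hF, sharpV_e_of_ne]

theorem IE_mem_G₃ : IE ∈ G₃ :=
  Subalgebra.mul_mem _
    (Subalgebra.mul_mem _ (Algebra.subset_adjoin (by simp)) (Algebra.subset_adjoin (by simp)))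
    (Algebra.subset_adjoin (by simp))

theorem involute_IE : involute IE = -IE := by
  simp only [IE, map_mul, involute_ι, neg_mul, mul_neg, neg_neg]

theorem ι_mul_IE {v : Fin 5 → ℝ} (hv : ∀ w ∈ ({e 1, e 2, e 3} : Set _), Q.IsOrtho v w) :
    ι Q v * IE = -(IE * ι Q v) := by
  have h := ι_mul_involute_of_mem_G₃ hv IE_mem_G₃
  rw [involute_IE, mul_neg] at h
  rw [← h, neg_neg]

theorem wedgeVec_add (A B : CliffordAlgebra Q) (v : Fin 5 → ℝ) :
    wedgeVec (A + B) v = wedgeVec A v + wedgeVec B v := by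
  simp only [wedgeVec, map_add, add_mul, mul_add, smul_add]
  abel

theorem wedgeVec_neg (A : CliffordAlgebra Q) (v : Fin 5 → ℝ) :
    wedgeVec (-A) v = -wedgeVec A v := by
  simp only [wedgeVec, map_neg, neg_mul, mul_neg, ← neg_add, smul_neg]

theorem wedgeVec_mul_left {X : CliffordAlgebra Q} {v : Fin 5 → ℝ}
    (h : ι Q v * involute X = X * ι Q v) (Y : CliffordAlgebra Q) :
    wedgeVec (X * Y) v = X * wedgeVec Y v := by
  rw [wedgeVec, wedgeVec, map_mul, ← mul_assoc, h, mul_assoc, mul_assoc, ← mul_add, mul_smul_comm]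

theorem wedgeVec_one (v : Fin 5 → ℝ) : wedgeVec 1 v = ι Q v := by
  rw [wedgeVec, map_one, one_mul, mul_one, ← two_smul ℝ, smul_smul]
  norm_num

theorem wedgeVec_eq_mul {X : CliffordAlgebra Q} {v : Fin 5 → ℝ}
    (h : ι Q v * involute X = X * ι Q v) : wedgeVec X v = X * ι Q v := by
  simpa only [mul_one, wedgeVec_one] using wedgeVec_mul_left h 1

noncomputable def E₀ : CliffordAlgebra Q := wedgeVec (ι Q (e 0)) (e 4)

theorem E₀_eq : E₀ = 1 + ι Q (e 0) * ι Q (e 4) := by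
  have h : ι Q (e 0) * ι Q (e 4) + -(-2 - ι Q (e 0) * ι Q (e 4))
      = (2 : ℝ) • (1 + ι Q (e 0) * ι Q (e 4)) := by
    rw [two_smul, neg_sub, sub_neg_eq_add, ← one_add_one_eq_two]
    abel
  rw [E₀, wedgeVec, involute_ι, mul_neg, ι_e4_mul_ι_e0, h, smul_smul]
  norm_num

theorem ι_e4_mul_E₀ : ι Q (e 4) * E₀ = -ι Q (e 4) := by
  rw [E₀_eq, mul_add, mul_one, ← mul_assoc, ι_e4_mul_ι_e0, sub_mul, mul_assoc, ι_e4_mul_self]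
  noncomm_ring

theorem E₀_mul_self : E₀ * E₀ = 1 := by
  nth_rewrite 1 [E₀_eq]
  rw [add_mul, one_mul, mul_assoc, ι_e4_mul_E₀, E₀_eq]
  noncomm_ring

theorem ι_e0_mul_IE : ι Q (e 0) * IE = -(IE * ι Q (e 0)) :=
  ι_mul_IE (by simp [isOrtho_e_iff, Bmat])

theorem ι_e4_mul_IE : ι Q (e 4) * IE = -(IE * ι Q (e 4)) :=
  ι_mul_IE (by simp [isOrtho_e_iff, Bmat])

theorem IE_mul_E₀ : IE * E₀ = E₀ * IE :=
  calc IE * E₀ = IE + IE * ι Q (e 0) * ι Q (e 4) := by rw [E₀_eq, mul_add, mul_one, mul_assoc]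
    _ = IE + ι Q (e 0) * (ι Q (e 4) * IE) := by
        rw [ι_e4_mul_IE, mul_neg, ← mul_assoc, ι_e0_mul_IE, neg_mul, neg_neg]
    _ = E₀ * IE := by rw [E₀_eq, add_mul, one_mul, mul_assoc]

theorem wedgeVec_ι_e0_e1_e2_e3 :
    wedgeVec (wedgeVec (wedgeVec (ι Q (e 0)) (e 1)) (e 2)) (e 3) = ι Q (e 0) * IE := by
  have mem {S : Set (Fin 5 → ℝ)} {w : Fin 5 → ℝ} (hw : w ∈ S) :
      ι Q w ∈ Algebra.adjoin ℝ (ι Q '' S) :=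
    Algebra.subset_adjoin ⟨w, hw, rfl⟩
  rw [wedgeVec_eq_mul (ι_mul_involute_of_mem_adjoin (S := {e 0})
      (by simp [isOrtho_e_iff, Bmat]) (mem rfl)),
    wedgeVec_eq_mul (ι_mul_involute_of_mem_adjoin (S := {e 0, e 1})
      (by simp [isOrtho_e_iff, Bmat]) (Subalgebra.mul_mem _ (mem (by simp)) (mem (by simp)))),
    wedgeVec_eq_mul (ι_mul_involute_of_mem_adjoin (S := {e 0, e 1, e 2})
      (by simp [isOrtho_e_iff, Bmat])
      (Subalgebra.mul_mem _ (Subalgebra.mul_mem _ (mem (by simp)) (mem (by simp)))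
        (mem (by simp)))),
    IE]
  simp only [mul_assoc]

theorem Ic_eq : Ic = -(IE * E₀) := by
  rw [Ic, wedgeVec_ι_e0_e1_e2_e3, ι_e0_mul_IE, wedgeVec_neg,
    wedgeVec_mul_left (ι_e4_mul_involute_of_mem_G₃ IE_mem_G₃), E₀]

theorem wedgeVec_add_mul_ι_e0 {C D : CliffordAlgebra Q} (hC : C ∈ G₃) (hD : D ∈ G₃) :
    wedgeVec (C + D * ι Q (e 0)) (e 4) = C * ι Q (e 4) + D * E₀ := by
  rw [wedgeVec_add, wedgeVec_eq_mul (ι_e4_mul_involute_of_mem_G₃ hC),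
    wedgeVec_mul_left (ι_e4_mul_involute_of_mem_G₃ hD), E₀]

theorem wedgeVec_e4_mul_neg_Ic {C D : CliffordAlgebra Q} (hC : C ∈ G₃) (hD : D ∈ G₃) :
    wedgeVec (C + D * ι Q (e 0)) (e 4) * -Ic = C * IE * ι Q (e 4) + D * IE := by
  rw [wedgeVec_add_mul_ι_e0 hC hD, Ic_eq, neg_neg]
  calc (C * ι Q (e 4) + D * E₀) * (IE * E₀)
      = C * (ι Q (e 4) * IE) * E₀ + D * (E₀ * IE) * E₀ := by noncomm_ring
    _ = -(C * IE * (ι Q (e 4) * E₀)) + D * IE * (E₀ * E₀) := by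
        rw [ι_e4_mul_IE, ← IE_mul_E₀]
        noncomm_ring
    _ = C * IE * ι Q (e 4) + D * IE := by
        rw [ι_e4_mul_E₀, E₀_mul_self]
        noncomm_ring

/-- (PGA duality via the Euclidean split.) For all `C, D` in the
Euclidean subalgebra `G₃`, `(C + D ι(e₀))^{*_P} = −D^{*_E} + C^{*_E} ι(e₀)`. -/
theorem dualP_euclidean_split (F : CliffordAlgebra Q →ₐ[ℝ] CliffordAlgebra Q)
    (hF : ∀ v : Fin 5 → ℝ, F (ι Q v) = ι Q (sharpV v)) :
    ∀ C ∈ G₃, ∀ D ∈ G₃,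
      dualP F (C + D * ι Q (e 0)) = -(dualE D) + dualE C * ι Q (e 0) := by
  intro C hC D hD
  rw [dualP, wedgeVec_e4_mul_neg_Ic hC hD]
  simp only [map_add, map_mul, apply_eq_self_of_mem_G₃ hF hC, apply_eq_self_of_mem_G₃ hF hD,
    apply_eq_self_of_mem_G₃ hF IE_mem_G₃, hF, sharpV_e4, map_neg, dualE]
  noncomm_ring
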